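/- Let C be a nonempty (n,d,w) constant-weight code with d even and d < 2w ≤ n, with distance distribution {A_{2i}}, and let H = {d/2, …, w}. Suppose i ≠ j are in H with m_{i,j} < d, and let P_i, P_j be integers with P_i ≥ T(i,w,i,n−w,d) and P_j ≥ T(j,w,j,n−w,d). Then A_{2i}/P_i + A_{2j}/P_j ≤ 1. -/

import Mathlib

/-- The number of ones of a binary vector. -/
def wtOnes {n : ℕ} (u : Fin n → ZMod 2) : ℕ :=
  (Finset.univ.filter (fun t => u t = 1)).card

/-- `C` is an `(n,d,w)` constant-weight binary code. -/
def IsCWCode (n d w : ℕ) (C : Finset (Fin n → ZMod 2)) : Prop :=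
  (∀ c ∈ C, wtOnes c = w) ∧
  ∀ u ∈ C, ∀ v ∈ C, u ≠ v → d ≤ hammingDist u v

/-- `A n d w`: the largest possible size of an `(n,d,w)` constant-weight code. -/
noncomputable def A (n d w : ℕ) : ℕ :=
  sSup {M | ∃ C : Finset (Fin n → ZMod 2), IsCWCode n d w C ∧ C.card = M}

/-- `C` is a `(w1,n1,w2,n2,d)` doubly-constant-weight binary code. -/
def IsDCWCode (w1 n1 w2 n2 d : ℕ) (C : Finset (Fin n1 ⊕ Fin n2 → ZMod 2)) : Prop :=
  (∀ c ∈ C,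
    (Finset.univ.filter (fun t : Fin n1 => c (Sum.inl t) = 1)).card = w1 ∧
    (Finset.univ.filter (fun t : Fin n2 => c (Sum.inr t) = 1)).card = w2) ∧
  ∀ u ∈ C, ∀ v ∈ C, u ≠ v → d ≤ hammingDist u v

/-- `T w1 n1 w2 n2 d`: the largest possible size of a `(w1,n1,w2,n2,d)`
doubly-constant-weight code. -/
noncomputable def T (w1 n1 w2 n2 d : ℕ) : ℕ :=
  sSup {M | ∃ C : Finset (Fin n1 ⊕ Fin n2 → ZMod 2), IsDCWCode w1 n1 w2 n2 d C ∧ C.card = M}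

/-- `S_i(c)`: the set of codewords of `C` at distance `i` from `c`. -/
def Sdist {n : ℕ} (C : Finset (Fin n → ZMod 2)) (c : Fin n → ZMod 2) (i : ℕ) :
    Finset (Fin n → ZMod 2) :=
  C.filter (fun u => hammingDist u c = i)

/-- The distance distribution `A_i = (1/|C|) ∑_{c ∈ C} |S_i(c)|` of a code `C`. -/
noncomputable def distDistr {n : ℕ} (C : Finset (Fin n → ZMod 2)) (i : ℕ) : ℚ :=
  (∑ c ∈ C, ((Sdist C c i).card : ℚ)) / (C.card : ℚ)

/-- `V_i`: vectors of `F^n` with exactly `i` ones on the first `w` coordinates and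
exactly `i` ones on the last `n - w` coordinates. -/
def Vset (n w i : ℕ) : Finset (Fin n → ZMod 2) :=
  Finset.univ.filter (fun u =>
    (Finset.univ.filter (fun t : Fin n => t.val < w ∧ u t = 1)).card = i ∧
    (Finset.univ.filter (fun t : Fin n => w ≤ t.val ∧ u t = 1)).card = i)

/-- `m_{i,j} = max { d(u,v) : u ∈ V_i, v ∈ V_j }`. -/
def mMax (n w i j : ℕ) : ℕ :=
  ((Vset n w i) ×ˢ (Vset n w j)).sup fun p => hammingDist p.1 p.2

/-- `P⁻_k(n;x) = ∑_{j odd} C(x,j) C(n-x,k-j)`. -/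
def Pminus (k n x : ℕ) : ℕ :=
  ∑ j ∈ Finset.range (k + 1), if Odd j then x.choose j * (n - x).choose (k - j) else 0

/-- `P⁺_k(n;x) = ∑_{j even} C(x,j) C(n-x,k-j)`. -/
def Pplus (k n x : ℕ) : ℕ :=
  ∑ j ∈ Finset.range (k + 1), if Even j then x.choose j * (n - x).choose (k - j) else 0

/-- The Krawtchouk polynomial `P_k(n;x) = ∑_j (-1)^j C(x,j) C(n-x,k-j)` at integer points. -/
def Kraw (k n x : ℕ) : ℤ :=
  ∑ j ∈ Finset.range (k + 1), (-1 : ℤ) ^ j * x.choose j * (n - x).choose (k - j)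

/-! Fix a codeword `c`. Adding `c` and permuting the coordinates so that the support of `c` comes
first is an isometry of `F^n`; it sends a codeword at distance `2i` from `c` to a word with `i` ones
on the first `w` coordinates and `i` ones on the last `n - w`. Hence `S_{2i}(c)` becomes a
`(i,w,i,n-w,d)` doubly-constant-weight code, so `|S_{2i}(c)| ≤ T(i,w,i,n-w,d) ≤ P_i`; and since
`m_{i,j} < d`, the sets `S_{2i}(c)` and `S_{2j}(c)` cannot both be nonempty. Therefore
`|S_{2i}(c)|/P_i + |S_{2j}(c)|/P_j ≤ 1` for every `c`, and averaging over `c` gives the bound. -/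

open Finset

def IsSplitWt {n₁ n₂ : ℕ} (w₁ w₂ : ℕ) (x : Fin n₁ ⊕ Fin n₂ → ZMod 2) : Prop :=
  #{t | x (Sum.inl t) = 1} = w₁ ∧ #{t | x (Sum.inr t) = 1} = w₂

lemma hammingDist_comp_equiv {α β γ : Type*} [Fintype α] [Fintype β] [DecidableEq γ]
    (e : α ≃ β) (x y : β → γ) : hammingDist (x ∘ e) (y ∘ e) = hammingDist x y :=
  card_equiv e (by simp)

lemma card_filter_eq_add_of_sumEquiv {α β γ : Type*} [Fintype α] [Fintype β] [Fintype γ]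
    (e : α ⊕ β ≃ γ) (R : γ → Prop) [DecidablePred R] :
    #{t | R t} = #{a | R (e (Sum.inl a))} + #{b | R (e (Sum.inr b))} := by
  simp only [card_filter]
  rw [← Fintype.sum_equiv e _ _ fun _ => rfl, Fintype.sum_sum_type]

lemma wtOnes_le {n : ℕ} (u : Fin n → ZMod 2) : wtOnes u ≤ n :=
  (card_le_univ _).trans_eq (Fintype.card_fin n)

lemma card_filter_eq_of_hammingDist {n i : ℕ} {u c : Fin n → ZMod 2}
    (hwt : wtOnes u = wtOnes c) (hdist : hammingDist u c = 2 * i) :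
    #{t | c t = 1 ∧ u t = 0} = i ∧ #{t | c t = 0 ∧ u t = 1} = i := by
  obtain ⟨hd, hu, hc⟩ :
      hammingDist u c = #{t | c t = 1 ∧ u t = 0} + #{t | c t = 0 ∧ u t = 1} ∧
      wtOnes u = #{t | c t = 1 ∧ u t = 1} + #{t | c t = 0 ∧ u t = 1} ∧
      wtOnes c = #{t | c t = 1 ∧ u t = 1} + #{t | c t = 1 ∧ u t = 0} := by
    refine ⟨?_, ?_, ?_⟩ <;>
    · simp only [hammingDist, wtOnes, card_filter, ← sum_add_distrib]
      refine sum_congr rfl fun t _ => ?_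
      generalize u t = x; generalize c t = y; revert x y; decide
  omega

lemma exists_sumEquiv_of_wtOnes {w k : ℕ} {c : Fin (w + k) → ZMod 2} (hc : wtOnes c = w) :
    ∃ e : Fin w ⊕ Fin k ≃ Fin (w + k),
      (∀ a, c (e (Sum.inl a)) = 1) ∧ ∀ b, c (e (Sum.inr b)) = 0 := by
  have h₁ : Fintype.card {t // c t = 1} = w := by rw [Fintype.card_subtype]; exact hc
  have h₀ : Fintype.card {t // ¬c t = 1} = k := by
    rw [Fintype.card_subtype_compl, h₁, Fintype.card_fin, Nat.add_sub_cancel_left]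
  refine ⟨(Equiv.sumCongr (Fintype.equivFinOfCardEq h₁).symm
    (Fintype.equivFinOfCardEq h₀).symm).trans (Equiv.sumCompl _), ?_⟩
  exact ⟨fun a => ((Fintype.equivFinOfCardEq h₁).symm a).2,
    fun b => (by decide : ∀ x : ZMod 2, x ≠ 1 → x = 0) _ ((Fintype.equivFinOfCardEq h₀).symm b).2⟩

lemma exists_isometry_isSplitWt {w k : ℕ} {c : Fin (w + k) → ZMod 2} (hc : wtOnes c = w) :
    ∃ Ψ : (Fin (w + k) → ZMod 2) → (Fin w ⊕ Fin k → ZMod 2),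
      (∀ u v, hammingDist (Ψ u) (Ψ v) = hammingDist u v) ∧
      ∀ i u, wtOnes u = w → hammingDist u c = 2 * i → IsSplitWt i i (Ψ u) := by
  obtain ⟨e, he₁, he₀⟩ := exists_sumEquiv_of_wtOnes hc
  refine ⟨fun u => (u + c) ∘ e, fun u v => ?_, fun i u hu hdist => ?_⟩
  · rw [hammingDist_comp_equiv]
    exact hammingDist_comp (fun t x => x + c t) fun t => add_left_injective _
  · obtain ⟨h₁₀, h₀₁⟩ := card_filter_eq_of_hammingDist (hu.trans hc.symm) hdist
    rw [card_filter_eq_add_of_sumEquiv e] at h₁₀ h₀₁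
    exact ⟨by simpa [he₁, he₀] using h₁₀, by simpa [he₁, he₀] using h₀₁⟩

lemma comp_finSumFinEquiv_symm_mem_Vset {w k i : ℕ} {x : Fin w ⊕ Fin k → ZMod 2}
    (hx : IsSplitWt i i x) : x ∘ finSumFinEquiv.symm ∈ Vset (w + k) w i := by
  simp only [Vset, mem_filter, mem_univ, true_and, card_filter_eq_add_of_sumEquiv finSumFinEquiv,
    Function.comp_apply, finSumFinEquiv_apply_left, finSumFinEquiv_apply_right,
    Fin.val_castAdd, Fin.val_natAdd]
  simpa [fun a : Fin w => not_le.2 a.isLt, IsSplitWt] using hx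

lemma hammingDist_le_mMax {w k i j : ℕ} {x y : Fin w ⊕ Fin k → ZMod 2}
    (hx : IsSplitWt i i x) (hy : IsSplitWt j j y) : hammingDist x y ≤ mMax (w + k) w i j := by
  rw [← hammingDist_comp_equiv finSumFinEquiv.symm, mMax]
  exact le_sup (f := fun p : (Fin (w + k) → ZMod 2) × (Fin (w + k) → ZMod 2) =>
      hammingDist p.1 p.2) (b := (x ∘ finSumFinEquiv.symm, y ∘ finSumFinEquiv.symm))
    (mem_product.2 ⟨comp_finSumFinEquiv_symm_mem_Vset hx, comp_finSumFinEquiv_symm_mem_Vset hy⟩)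

lemma card_le_T {w₁ n₁ w₂ n₂ d : ℕ} {C : Finset (Fin n₁ ⊕ Fin n₂ → ZMod 2)}
    (hC : IsDCWCode w₁ n₁ w₂ n₂ d C) : #C ≤ T w₁ n₁ w₂ n₂ d :=
  le_csSup ⟨_, fun _ ⟨D, _, hD⟩ => hD ▸ card_le_univ D⟩ ⟨C, hC, rfl⟩

lemma card_le_T_of_isometry {ι : Type*} [Fintype ι] {w₁ n₁ w₂ n₂ d : ℕ}
    {S : Finset (ι → ZMod 2)} (hS : ∀ u ∈ S, ∀ v ∈ S, u ≠ v → d ≤ hammingDist u v)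
    (Ψ : (ι → ZMod 2) → (Fin n₁ ⊕ Fin n₂ → ZMod 2))
    (hΨ : ∀ u v, hammingDist (Ψ u) (Ψ v) = hammingDist u v)
    (hwt : ∀ u ∈ S, IsSplitWt w₁ w₂ (Ψ u)) : #S ≤ T w₁ n₁ w₂ n₂ d := by
  have hinj : Set.InjOn Ψ S := fun u _ v _ h =>
    hammingDist_eq_zero.1 (by rw [← hΨ, h, hammingDist_self])
  rw [← card_image_of_injOn hinj]
  refine card_le_T ⟨forall_mem_image.2 hwt, ?_⟩
  simp only [forall_mem_image, hΨ]
  exact fun u hu v hv huv => hS u hu v hv fun h => huv (h ▸ rfl)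

section Codeword

variable {w k d : ℕ} {C : Finset (Fin (w + k) → ZMod 2)} {c : Fin (w + k) → ZMod 2}

lemma card_Sdist_le_T (hcode : IsCWCode (w + k) d w C) (hc : wtOnes c = w) (i : ℕ) :
    #(Sdist C c (2 * i)) ≤ T i w i k d := by
  obtain ⟨Ψ, hΨ, hsplit⟩ := exists_isometry_isSplitWt hc
  refine card_le_T_of_isometry (fun u hu v hv => hcode.2 u ?_ v ?_) Ψ hΨ fun u hu => ?_
  · exact (mem_filter.1 hu).1
  · exact (mem_filter.1 hv).1
  · obtain ⟨huC, hdist⟩ := mem_filter.1 hu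
    exact hsplit i u (hcode.1 u huC) hdist

lemma Sdist_eq_empty_or_of_mMax_lt (hcode : IsCWCode (w + k) d w C) (hc : wtOnes c = w)
    {i j : ℕ} (hij : i ≠ j) (hm : mMax (w + k) w i j < d) :
    Sdist C c (2 * i) = ∅ ∨ Sdist C c (2 * j) = ∅ := by
  obtain ⟨Ψ, hΨ, hsplit⟩ := exists_isometry_isSplitWt hc
  rw [or_iff_not_imp_left, ← ne_eq, ← nonempty_iff_ne_empty, eq_empty_iff_forall_notMem]
  rintro ⟨a, ha⟩ b hb
  obtain ⟨haC, hac⟩ := mem_filter.1 ha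
  obtain ⟨hbC, hbc⟩ := mem_filter.1 hb
  have hab : a ≠ b := by rintro rfl; omega
  have := hΨ a b ▸ hammingDist_le_mMax (hsplit i a (hcode.1 a haC) hac)
    (hsplit j b (hcode.1 b hbC) hbc)
  exact absurd (hcode.2 a haC b hbC hab) (by omega)

end Codeword

lemma natCast_div_le_one_of_le {m : ℕ} {P : ℤ} (h : (m : ℤ) ≤ P) : (m : ℚ) / P ≤ 1 :=
  div_le_one_of_le₀ (by exact_mod_cast h) (by exact_mod_cast (Int.natCast_nonneg m).trans h)

lemma card_Sdist_div_add_div_le_one {n d w i j : ℕ} {C : Finset (Fin n → ZMod 2)}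
    (hcode : IsCWCode n d w C) {c : Fin n → ZMod 2} (hc : c ∈ C) (hij : i ≠ j)
    (hm : mMax n w i j < d) {Pi Pj : ℤ} (hPi : (T i w i (n - w) d : ℤ) ≤ Pi)
    (hPj : (T j w j (n - w) d : ℤ) ≤ Pj) :
    (#(Sdist C c (2 * i)) : ℚ) / Pi + (#(Sdist C c (2 * j)) : ℚ) / Pj ≤ 1 := by
  have hwt := hcode.1 c hc
  obtain ⟨k, rfl⟩ := Nat.exists_eq_add_of_le (hwt ▸ wtOnes_le c)
  rw [Nat.add_sub_cancel_left] at hPi hPj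
  rcases Sdist_eq_empty_or_of_mMax_lt hcode hwt hij hm with h | h
  · simpa [h] using
      natCast_div_le_one_of_le ((Nat.cast_le.2 (card_Sdist_le_T hcode hwt j)).trans hPj)
  · simpa [h] using
      natCast_div_le_one_of_le ((Nat.cast_le.2 (card_Sdist_le_T hcode hwt i)).trans hPi)

theorem distDistr_pair_bound_general (n d w i j : ℕ) (C : Finset (Fin n → ZMod 2))
    (hcode : IsCWCode n d w C) (hij : i ≠ j)
    (hm : mMax n w i j < d)
    (Pi Pj : ℤ) (hPi : (T i w i (n - w) d : ℤ) ≤ Pi) (hPj : (T j w j (n - w) d : ℤ) ≤ Pj) :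
    distDistr C (2 * i) / (Pi : ℚ) + distDistr C (2 * j) / (Pj : ℚ) ≤ 1 := by
  calc distDistr C (2 * i) / (Pi : ℚ) + distDistr C (2 * j) / (Pj : ℚ)
      = (∑ c ∈ C, ((#(Sdist C c (2 * i)) : ℚ) / Pi + (#(Sdist C c (2 * j)) : ℚ) / Pj)) / #C := by
        rw [distDistr, distDistr, sum_add_distrib, ← sum_div, ← sum_div]
        ring
    _ ≤ 1 := by
        refine div_le_one_of_le₀ ((sum_le_card_nsmul C _ 1 fun c hc => ?_).trans_eq (by simp))
          (Nat.cast_nonneg _)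
        exact card_Sdist_div_add_div_le_one hcode hc hij hm hPi hPj

/-- For a nonempty `(n,d,w)` constant-weight code `C` (`d` even,
`d < 2w ≤ n`) with distance distribution `{A_{2i}}`, `i ≠ j` in `H` with
`m_{i,j} < d`, and integers `P_i ≥ T(i,w,i,n-w,d)`, `P_j ≥ T(j,w,j,n-w,d)`, one has
`A_{2i}/P_i + A_{2j}/P_j ≤ 1`. -/
theorem distDistr_pair_bound (n d w i j : ℕ) (C : Finset (Fin n → ZMod 2)) (hC : C.Nonempty)
    (hcode : IsCWCode n d w C) (hd : Even d) (hdw : d < 2 * w) (hwn : 2 * w ≤ n)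
    (hi : i ∈ Finset.Icc (d / 2) w) (hj : j ∈ Finset.Icc (d / 2) w) (hij : i ≠ j)
    (hm : mMax n w i j < d)
    (Pi Pj : ℤ) (hPi : (T i w i (n - w) d : ℤ) ≤ Pi) (hPj : (T j w j (n - w) d : ℤ) ≤ Pj) :
    distDistr C (2 * i) / (Pi : ℚ) + distDistr C (2 * j) / (Pj : ℚ) ≤ 1 :=
  distDistr_pair_bound_general n d w i j C hcode hij hm Pi Pj hPi hPj
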